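/- arXiv:1703.09279 — 4 statements merged into one kernel-verified Lean document; each statement's English description precedes it below -/
import Mathlib

section
/- Let F be the cdf of the uniform distribution on [a,b] with b > 2a > 0, k = b/a − 1, and y = (1/2)(1 − 1/k). Setting buyer price p = F^{-1}(y) = a(yk+1) and seller price q = F^{-1}(y²/2) = (a/2)(2 + y²k), the quantity (n/2)·F(q)·(1−F(p))·p − (n/2)·F(q)·q equals (a·k/128)·n·(1 − 1/k)^4. -/
/-! At the posted prices the buyer accepts with probability `1 - F p = 1 - y` and the seller
with probability `F q = y² / 2`, since `p` and `q` are the `F`-quantiles of `y` and `y² / 2`.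
The profit is therefore `(n / 2) (y² / 2) ((1 - y) p - q)`, and `y k = (k - 1) / 2` turns the
margin `(1 - y) p - q` into `a y (k - 1) / 4`; substituting `y = (k - 1) / (2 k)` gives the
stated value. -/

lemma one_lt_div_sub_one {a b : ℝ} (ha : 0 < a) (hb : 2 * a < b) : 1 < b / a - 1 := by
  rw [lt_sub_iff_add_lt, lt_div_iff₀ ha]
  linarith

lemma uniform_cdf_quantile {a k : ℝ} (ha : a ≠ 0) (hk : k ≠ 0) (t : ℝ) :
    (a * (t * k + 1) - a) / (a * k) = t := by
  field_simp
  ring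

lemma quantile_margin {a k y : ℝ} (hyk : y * k = (k - 1) / 2) :
    (1 - y) * (a * (y * k + 1)) - a / 2 * (2 + y ^ 2 * k) = a * y * (k - 1) / 4 := by
  linear_combination -(3 / 2) * a * y * hyk

theorem stmt12 (a b : ℝ) (ha : 0 < a) (hb : 2 * a < b)
    (k : ℝ) (hk : k = b / a - 1)
    (y : ℝ) (hy : y = (1/2) * (1 - 1/k))
    (p : ℝ) (hpdef : p = a * (y * k + 1))
    (q : ℝ) (hqdef : q = (a/2) * (2 + y^2 * k))
    (F : ℝ → ℝ) (hF : ∀ x, F x = (x - a) / (a * k))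
    (n : ℝ) :
    (n/2) * F q * (1 - F p) * p - (n/2) * F q * q =
      (a * k / 128) * n * (1 - 1/k)^4 := by
  have hk0 : k ≠ 0 := (one_pos.trans (hk ▸ one_lt_div_sub_one ha hb)).ne'
  have hFp : F p = y := by rw [hF, hpdef, uniform_cdf_quantile ha.ne' hk0]
  have hFq : F q = y ^ 2 / 2 := by
    rw [hF, hqdef, show a / 2 * (2 + y ^ 2 * k) = a * (y ^ 2 / 2 * k + 1) by ring,
      uniform_cdf_quantile ha.ne' hk0]
  have hyk : y * k = (k - 1) / 2 := by
    rw [hy]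
    field_simp
  calc (n/2) * F q * (1 - F p) * p - (n/2) * F q * q
      = n / 2 * (y ^ 2 / 2) * ((1 - y) * (a * (y * k + 1)) - a / 2 * (2 + y ^ 2 * k)) := by
        rw [hFp, hFq, hpdef, hqdef]; ring
    _ = n * a * y ^ 3 * (k - 1) / 16 := by rw [quantile_margin hyk]; ring
    _ = (a * k / 128) * n * (1 - 1/k)^4 := by
        rw [hy]
        field_simp
        ring
end

section
/- Let F be a continuous cdf, π(t) = Π_{j=1}^{t−1} F(p_j), and λ(y) = ∫_y^∞ x f(x) dx. Swapping two adjacent buyer prices p_{t*} = α < β = p_{t*+1} in the sequence (keeping all others fixed) changes the welfare W(p) = μ + Σ_{t=1}^n π(t)·λ(p_t) by π(t*)·(1−F(α))·(1−F(β))·(E[Y | Y ≥ β] − E[Y | Y ≥ α]) ≥ 0; hence the buyer prices of a welfare-optimal posted-price sequence may be assumed nonincreasing. -/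
/-!
Only the two swapped periods contribute: periods before them see the same prices, and periods
after them see the same product of acceptance probabilities `F`. Writing `G = 1 - F` for the
tail mass, the net change is `π(t*) (G α λ β - G β λ α)`, and this is nonnegative because
the conditional tail mean `λ y / G y` is nondecreasing: moving the cut from `α` up to `β`
removes mass on `[α, β)`, where `x < β`, while the remaining tail has mean at least `β`.
-/

open MeasureTheory Set

section TailMoments

variable {μ : Measure ℝ} {f : ℝ → ℝ}

theorem one_sub_setIntegral_Iic [NullSingletonClass μ] (hfint : Integrable f μ)
    (hf1 : ∫ x, f x ∂μ = 1) (y : ℝ) :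
    1 - ∫ x in Iic y, f x ∂μ = ∫ x in Ici y, f x ∂μ := by
  have h := integral_add_compl (μ := μ) measurableSet_Iic hfint (s := Iic y)
  rw [compl_Iic, ← integral_Ici_eq_integral_Ioi] at h
  linarith

theorem setIntegral_Ici_mul_setIntegral_Ici_id_mul_le (hf0 : ∀ x, 0 ≤ f x)
    (hfint : Integrable f μ) (hxf : Integrable (fun x => x * f x) μ) {α β : ℝ}
    (hαβ : α ≤ β) :
    (∫ x in Ici β, f x ∂μ) * ∫ x in Ici α, x * f x ∂μ ≤
      (∫ x in Ici α, f x ∂μ) * ∫ x in Ici β, x * f x ∂μ := by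
  have hsplit : ∀ g : ℝ → ℝ, Integrable g μ →
      ∫ x in Ici α, g x ∂μ = (∫ x in Ico α β, g x ∂μ) + ∫ x in Ici β, g x ∂μ := by
    intro g hg
    rw [← Ico_union_Ici_eq_Ici hαβ, setIntegral_union
      ((Iio_disjoint_Ici le_rfl).mono_left Ico_subset_Iio_self) measurableSet_Ici
      hg.integrableOn hg.integrableOn]
  have hmid : ∫ x in Ico α β, x * f x ∂μ ≤ β * ∫ x in Ico α β, f x ∂μ := by
    rw [← integral_const_mul]
    exact setIntegral_mono_on hxf.integrableOn (hfint.const_mul β).integrableOn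
      measurableSet_Ico fun x hx => mul_le_mul_of_nonneg_right hx.2.le (hf0 x)
  have htail : β * ∫ x in Ici β, f x ∂μ ≤ ∫ x in Ici β, x * f x ∂μ := by
    rw [← integral_const_mul]
    exact setIntegral_mono_on (hfint.const_mul β).integrableOn hxf.integrableOn
      measurableSet_Ici fun x hx => mul_le_mul_of_nonneg_right hx (hf0 x)
  have hmid_nonneg : 0 ≤ ∫ x in Ico α β, f x ∂μ :=
    setIntegral_nonneg measurableSet_Ico fun x _ => hf0 x
  have htail_nonneg : 0 ≤ ∫ x in Ici β, f x ∂μ :=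
    setIntegral_nonneg measurableSet_Ici fun x _ => hf0 x
  rw [hsplit _ hfint, hsplit _ hxf]
  nlinarith [mul_le_mul_of_nonneg_left hmid htail_nonneg,
    mul_le_mul_of_nonneg_left htail hmid_nonneg]

end TailMoments

section AdjacentSwap

open Finset

variable {R : Type*} [CommRing R] (u v : ℕ → R) {k : ℕ}

theorem prod_range_comp_swap_of_ne {t : ℕ} (ht : t ≠ k + 1) :
    ∏ j ∈ range t, u (Equiv.swap k (k + 1) j) = ∏ j ∈ range t, u j := by
  rcases le_or_gt t k with htk | htk
  · refine prod_congr rfl fun j hj => ?_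
    rw [Finset.mem_range] at hj
    rw [Equiv.swap_apply_of_ne_of_ne (by omega) (by omega)]
  · refine Equiv.Perm.prod_comp _ _ _ fun j hj => ?_
    simp only [coe_range, Set.mem_Iio]
    by_contra! hjt
    exact hj (Equiv.swap_apply_of_ne_of_ne (by omega) (by omega))

theorem sum_prod_range_mul_comp_swap_sub {n : ℕ} (hkn : k + 1 < n) :
    ∑ t ∈ range n,
        (∏ j ∈ range t, u (Equiv.swap k (k + 1) j)) * v (Equiv.swap k (k + 1) t) -
      ∑ t ∈ range n, (∏ j ∈ range t, u j) * v t =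
      (∏ j ∈ range k, u j) * ((1 - u k) * v (k + 1) - (1 - u (k + 1)) * v k) := by
  rw [← sum_sub_distrib, sum_eq_add k (k + 1) (by omega)]
  · simp only [Equiv.swap_apply_left, Equiv.swap_apply_right, prod_range_succ,
      prod_range_comp_swap_of_ne u (by omega : k ≠ k + 1)]
    ring
  · intro t _ ⟨htk, htk'⟩
    rw [prod_range_comp_swap_of_ne u htk', Equiv.swap_apply_of_ne_of_ne htk htk', sub_self]
  all_goals exact fun h => absurd (Finset.mem_range.mpr (by omega)) h

end AdjacentSwap

theorem stmt13_general (f : ℝ → ℝ) (hf0 : ∀ x, 0 ≤ f x)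
    (hfint : Integrable f) (hf1 : (∫ x, f x) = 1)
    (hxf : Integrable (fun x => x * f x))
    (F lam : ℝ → ℝ)
    (hFdef : ∀ x, F x = ∫ t in Set.Iic x, f t)
    (hlamdef : ∀ y, lam y = ∫ x in Set.Ici y, x * f x)
    (μ : ℝ)
    (n : ℕ) (tstar : ℕ) (htn : tstar + 1 < n)
    (p p' : ℕ → ℝ) (α β : ℝ)
    (hα : p tstar = α) (hβ : p (tstar + 1) = β) (hab : α < β)
    (hp'1 : p' tstar = β) (hp'2 : p' (tstar + 1) = α)
    (hp'3 : ∀ t, t ≠ tstar → t ≠ tstar + 1 → p' t = p t)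
    (hFβ : F β < 1)
    (W : (ℕ → ℝ) → ℝ)
    (hW : ∀ pp, W pp =
      μ + ∑ t ∈ Finset.range n, (∏ j ∈ Finset.range t, F (pp j)) * lam (pp t)) :
    W p' - W p =
      (∏ j ∈ Finset.range tstar, F (p j)) * ((1 - F α) * (1 - F β) *
        (lam β / (1 - F β) - lam α / (1 - F α))) ∧
    0 ≤ W p' - W p := by
  have hFtail (y : ℝ) : 1 - F y = ∫ x in Ici y, f x := by
    rw [hFdef, one_sub_setIntegral_Iic hfint hf1]
  have hFα : F α < 1 := by
    have : ∫ x in Ici β, f x ≤ ∫ x in Ici α, f x :=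
      setIntegral_mono_set hfint.integrableOn (ae_of_all _ fun x => hf0 x)
        (Ici_subset_Ici.mpr hab.le).eventuallyLE
    linarith [hFtail α, hFtail β]
  have hswap : p' = p ∘ Equiv.swap tstar (tstar + 1) := by
    ext t
    by_cases h1 : t = tstar
    · simp [h1, hp'1, hβ]
    by_cases h2 : t = tstar + 1
    · simp [h2, hp'2, hα]
    simp [hp'3 t h1 h2, Equiv.swap_apply_of_ne_of_ne h1 h2]
  have hdiff : W p' - W p =
      (∏ j ∈ Finset.range tstar, F (p j)) * ((1 - F α) * lam β - (1 - F β) * lam α) := by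
    have hswap_sum := sum_prod_range_mul_comp_swap_sub (F ∘ p) (lam ∘ p) htn
    simp only [Function.comp_apply, hα, hβ] at hswap_sum
    rw [hW, hW, hswap, ← hswap_sum]
    simp only [Function.comp_apply]
    ring
  have hkey : (1 - F β) * lam α ≤ (1 - F α) * lam β := by
    rw [hFtail, hFtail, hlamdef, hlamdef]
    exact setIntegral_Ici_mul_setIntegral_Ici_id_mul_le hf0 hfint hxf hab.le
  have hprod_nonneg : 0 ≤ ∏ j ∈ Finset.range tstar, F (p j) :=
    Finset.prod_nonneg fun j _ =>
      hFdef (p j) ▸ setIntegral_nonneg measurableSet_Iic fun x _ => hf0 x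
  rw [hdiff]
  exact ⟨by field_simp [(sub_pos.mpr hFα).ne', (sub_pos.mpr hFβ).ne'],
    mul_nonneg hprod_nonneg (sub_nonneg.mpr hkey)⟩

theorem stmt13 (f : ℝ → ℝ) (hf0 : ∀ x, 0 ≤ f x) (hfmeas : Measurable f)
    (hfint : Integrable f) (hf1 : (∫ x, f x) = 1)
    (hxf : Integrable (fun x => x * f x))
    (F lam : ℝ → ℝ)
    (hFdef : ∀ x, F x = ∫ t in Set.Iic x, f t)
    (hlamdef : ∀ y, lam y = ∫ x in Set.Ici y, x * f x)
    (μ : ℝ) (hμ : μ = ∫ x, x * f x)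
    (n : ℕ) (tstar : ℕ) (htn : tstar + 1 < n)
    (p p' : ℕ → ℝ) (α β : ℝ)
    (hα : p tstar = α) (hβ : p (tstar + 1) = β) (hab : α < β)
    (hp'1 : p' tstar = β) (hp'2 : p' (tstar + 1) = α)
    (hp'3 : ∀ t, t ≠ tstar → t ≠ tstar + 1 → p' t = p t)
    (hFβ : F β < 1)
    (W : (ℕ → ℝ) → ℝ)
    (hW : ∀ pp, W pp =
      μ + ∑ t ∈ Finset.range n, (∏ j ∈ Finset.range t, F (pp j)) * lam (pp t)) :
    W p' - W p =
      (∏ j ∈ Finset.range tstar, F (p j)) * ((1 - F α) * (1 - F β) *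
        (lam β / (1 - F β) - lam α / (1 - F α))) ∧
    0 ≤ W p' - W p :=
  stmt13_general f hf0 hfint hf1 hxf F lam hFdef hlamdef μ n tstar htn p p' α β hα hβ hab hp'1 hp'2
    hp'3 hFβ W hW
end

section
/- Let F be a cdf with mean μ and define λ(y) = ∫_y^∞ x dF(x) ≤ μ. For a nonincreasing price sequence (p_t) with c = F(p_k) < 1 at the first index k where F(p_k) < 1, the welfare W = μ + Σ_{t=1}^{n} (Π_{j<t} F(p_j))·λ(p_t) satisfies W ≤ (2−c)/(1−c) · μ, uniformly in n. -/
/-!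
The terms with `t < k` vanish, since there `F (p t) = 1` forces `λ (p t) = 0`. From step `k` on,
the prices only decrease, so every factor `F (p j)` with `j ≥ k` is at most `c`, and the
no-sale probability of step `k + i` is at most `c ^ i`. The tail is therefore dominated by the
geometric series `μ (1 + c + c² + ⋯) = μ / (1 - c)`, and `μ + μ / (1 - c) = (2 - c) / (1 - c) · μ`.
-/

open Finset

lemma sum_range_le_sum_range_add_of_eq_zero {f : ℕ → ℝ} {k : ℕ} (hf : ∀ t, 0 ≤ f t)
    (hzero : ∀ t < k, f t = 0) (n : ℕ) :
    ∑ t ∈ range n, f t ≤ ∑ i ∈ range n, f (k + i) :=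
  calc ∑ t ∈ range n, f t
      ≤ ∑ t ∈ range (k + n), f t :=
        sum_le_sum_of_subset_of_nonneg (range_mono (Nat.le_add_left n k)) fun t _ _ => hf t
    _ = ∑ i ∈ range n, f (k + i) := by
        rw [sum_range_add, sum_eq_zero fun t ht => hzero t (mem_range.mp ht), zero_add]

lemma prod_range_add_le_pow {q : ℕ → ℝ} {k : ℕ} {c : ℝ} (hq : ∀ j, 0 ≤ q j ∧ q j ≤ 1)
    (hqc : ∀ j, q (k + j) ≤ c) (i : ℕ) :
    ∏ j ∈ range (k + i), q j ≤ c ^ i :=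
  calc ∏ j ∈ range (k + i), q j
      = (∏ j ∈ range k, q j) * ∏ j ∈ range i, q (k + j) := prod_range_add q k i
    _ ≤ 1 * ∏ _j ∈ range i, c :=
        mul_le_mul (prod_le_one (fun j _ => (hq j).1) fun j _ => (hq j).2)
          (prod_le_prod (fun j _ => (hq (k + j)).1) fun j _ => hqc j)
          (prod_nonneg fun j _ => (hq (k + j)).1) zero_le_one
    _ = c ^ i := by rw [one_mul, prod_const, card_range]

lemma sum_prod_mul_le_div_one_sub {q a : ℕ → ℝ} {k : ℕ} {c μ : ℝ}
    (hq : ∀ j, 0 ≤ q j ∧ q j ≤ 1) (hqc : ∀ j, q (k + j) ≤ c) (hc0 : 0 ≤ c) (hc1 : c < 1)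
    (ha : ∀ t, 0 ≤ a t ∧ a t ≤ μ) (hzero : ∀ t < k, a t = 0) (n : ℕ) :
    ∑ t ∈ range n, (∏ j ∈ range t, q j) * a t ≤ μ / (1 - c) := by
  have hμ : 0 ≤ μ := (ha 0).1.trans (ha 0).2
  calc ∑ t ∈ range n, (∏ j ∈ range t, q j) * a t
      ≤ ∑ i ∈ range n, (∏ j ∈ range (k + i), q j) * a (k + i) :=
        sum_range_le_sum_range_add_of_eq_zero
          (fun t => mul_nonneg (prod_nonneg fun j _ => (hq j).1) (ha t).1)
          (fun t ht => by rw [hzero t ht, mul_zero]) n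
    _ ≤ ∑ i ∈ range n, c ^ i * μ := sum_le_sum fun i _ =>
        mul_le_mul (prod_range_add_le_pow hq hqc i) (ha _).2 (ha _).1 (pow_nonneg hc0 i)
    _ = (∑ i ∈ Ico 0 n, c ^ i) * μ := by rw [sum_mul, range_eq_Ico]
    _ ≤ c ^ 0 / (1 - c) * μ := by gcongr; exact geom_sum_Ico_le_of_lt_one hc0 hc1
    _ = μ / (1 - c) := by rw [pow_zero, one_div_mul_eq_div]

theorem stmt14_general (F lam : ℝ → ℝ) (μ : ℝ)
    (hFmono : Monotone F) (hF01 : ∀ x, 0 ≤ F x ∧ F x ≤ 1)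
    (hlam : ∀ y, 0 ≤ lam y ∧ lam y ≤ μ)
    (hlam0 : ∀ y, F y = 1 → lam y = 0)
    (p : ℕ → ℝ) (hp : Antitone p)
    (k : ℕ) (hk : ∀ j, j < k → F (p j) = 1)
    (c : ℝ) (hc : c = F (p k)) (hclt : c < 1) :
    ∀ n : ℕ,
      μ + ∑ t ∈ Finset.range n, (∏ j ∈ Finset.range t, F (p j)) * lam (p t) ≤
        (2 - c) / (1 - c) * μ := by
  intro n
  have hsum := sum_prod_mul_le_div_one_sub (q := fun j => F (p j)) (a := fun t => lam (p t))
    (fun j => hF01 (p j)) (fun j => hc ▸ hFmono (hp (Nat.le_add_right k j)))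
    (hc ▸ (hF01 (p k)).1) hclt (fun t => hlam (p t))
    (fun t ht => hlam0 (p t) (hk t ht)) n
  have hsplit : (2 - c) / (1 - c) * μ = μ + μ / (1 - c) := by
    field_simp [(sub_pos.mpr hclt).ne']
    ring
  linarith

theorem stmt14 (F lam : ℝ → ℝ) (μ : ℝ) (hμ0 : 0 ≤ μ)
    (hFmono : Monotone F) (hF01 : ∀ x, 0 ≤ F x ∧ F x ≤ 1)
    (hlam : ∀ y, 0 ≤ lam y ∧ lam y ≤ μ)
    (hlam0 : ∀ y, F y = 1 → lam y = 0)
    (p : ℕ → ℝ) (hp : Antitone p)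
    (k : ℕ) (hk : ∀ j, j < k → F (p j) = 1)
    (c : ℝ) (hc : c = F (p k)) (hclt : c < 1) :
    ∀ n : ℕ,
      μ + ∑ t ∈ Finset.range n, (∏ j ∈ Finset.range t, F (p j)) * lam (p t) ≤
        (2 - c) / (1 - c) * μ :=
  stmt14_general F lam μ hFmono hF01 hlam hlam0 p hp k hk c hc hclt
end

section
/- In any α-balanced sequence with m buyers, every prefix of length i contains at least ⌈α·i/(α+1)⌉ sellers; consequently the sequence (S^α B)^m is a minimum element under the prefix-domination partial order among α-balanced sequences of length (α+1)m. -/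
/-!
A prefix of length `i` of a balanced sequence with `s` sellers contains `i - s` buyers, each
preceded by `α` sellers, so `α (i - s) ≤ s`, i.e. `α i ≤ (α + 1) s`, which is the ceiling bound.
The canonical sequence `(S^α B)^m` meets this bound: by induction over its blocks its prefixes
satisfy `(α + 1) s ≤ α i + α`, the integer form of `s ≤ ⌈α i / (α + 1)⌉`. Past the end of `σ`
both prefixes are the whole sequences, which have the same number `α m` of sellers.
-/

/-- The canonical α-balanced sequence `(S^α B)^m`, where `true` denotes a seller. -/
def canonicalSeq (α m : ℕ) : List Bool :=
  (List.replicate m (List.replicate α true ++ [false])).flatten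

theorem List.mul_length_le_of_mul_count_false_le {α : ℕ} {l : List Bool}
    (h : α * l.count false ≤ l.count true) : α * l.length ≤ (α + 1) * l.count true := by
  rw [← List.count_false_add_count_true l]
  linarith

theorem Int.ceil_natCast_div_le_of_le_mul {K : Type*} [Field K] [LinearOrder K]
    [IsStrictOrderedRing K] [FloorRing K] {a b c : ℕ} (h : a ≤ b * c) :
    ⌈(a : K) / b⌉ ≤ c := by
  rcases b.eq_zero_or_pos with rfl | hb
  · simp
  rw [Int.ceil_le, div_le_iff₀ (by exact_mod_cast hb)]
  exact_mod_cast (show a ≤ c * b by linarith)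

theorem List.count_true_take_replicate_true_append_false (α i : ℕ) :
    ((List.replicate α true ++ [false]).take i).count true = min i α := by
  cases h : i - α <;> simp [List.take_append, List.take_replicate, h]

namespace canonicalSeq

theorem succ (α m : ℕ) :
    canonicalSeq α (m + 1) = (List.replicate α true ++ [false]) ++ canonicalSeq α m := by
  simp [canonicalSeq, List.replicate_succ]

theorem count_true (α m : ℕ) : (canonicalSeq α m).count true = α * m := by
  simp [canonicalSeq, List.count_flatten, mul_comm]

theorem succ_mul_count_true_take_le (α m i : ℕ) :
    (α + 1) * ((canonicalSeq α m).take i).count true ≤ α * i + α := by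
  induction m generalizing i with
  | zero => simp [canonicalSeq]
  | succ m ih =>
    have hrest := ih (i - (α + 1))
    rw [succ, List.take_append, List.count_append,
      List.count_true_take_replicate_true_append_false]
    simp only [List.length_append, List.length_replicate, List.length_singleton]
    rcases le_or_gt i (α + 1) with hi | hi
    · have : i - (α + 1) = 0 := by omega
      simp only [this, List.take_zero, List.count_nil, add_zero]
      rcases le_total i α with h | h
      · rw [min_eq_left h]; nlinarith
      · rw [min_eq_right h]; nlinarith
    · rw [min_eq_right (by omega)]
      nlinarith [Nat.sub_add_cancel hi.le]

end canonicalSeq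

theorem stmt19_general (α m : ℕ) (σ : List Bool)
    (hcount : σ.count true = α * m)
    (hbal : ∀ i : ℕ, α * ((σ.take i).count false) ≤ (σ.take i).count true) :
    (∀ i : ℕ, i ≤ σ.length →
      (⌈((α * i : ℕ) : ℚ) / ((α : ℚ) + 1)⌉ : ℤ) ≤ (((σ.take i).count true : ℕ) : ℤ)) ∧
    (∀ i : ℕ, ((canonicalSeq α m).take i).count true ≤ (σ.take i).count true) := by
  have hprefix (i : ℕ) (hi : i ≤ σ.length) : α * i ≤ (α + 1) * (σ.take i).count true := by
    simpa [List.length_take_of_le hi] using List.mul_length_le_of_mul_count_false_le (hbal i)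
  refine ⟨fun i hi => ?_, fun i => ?_⟩
  · simpa using Int.ceil_natCast_div_le_of_le_mul (K := ℚ) (hprefix i hi)
  rcases le_or_gt i σ.length with hi | hi
  · have hcanon := canonicalSeq.succ_mul_count_true_take_le α m i
    have hσ := hprefix i hi
    exact Nat.lt_succ_iff.mp (Nat.lt_of_mul_lt_mul_left (a := α + 1) (by linarith))
  · rw [List.take_of_length_le hi.le, hcount, ← canonicalSeq.count_true α m]
    exact (List.take_sublist _ _).count_le _

theorem stmt19 (α m : ℕ) (hα : 0 < α) (hm : 0 < m) (σ : List Bool)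
    (hlen : σ.length = (α + 1) * m)
    (hcount : σ.count true = α * m)
    (hbal : ∀ i : ℕ, α * ((σ.take i).count false) ≤ (σ.take i).count true) :
    (∀ i : ℕ, i ≤ σ.length →
      (⌈((α * i : ℕ) : ℚ) / ((α : ℚ) + 1)⌉ : ℤ) ≤ (((σ.take i).count true : ℕ) : ℤ)) ∧
    (∀ i : ℕ, ((canonicalSeq α m).take i).count true ≤ (σ.take i).count true) :=
  stmt19_general α m σ hcount hbal
end
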